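/- arXiv:2012.05625 — 3 statements merged into one kernel-verified Lean document; each statement's English description precedes it below -/
import Mathlib

section
/- Let A be a real d×d matrix, α ≥ 0, and j ∈ ℕ. Then the operator (spectral) norm satisfies ‖(I − αA)^j − (I − jαA)‖ ≤ (1 + α‖A‖)^j − 1 − jα‖A‖. -/
set_option synthInstance.maxHeartbeats 1000000
set_option maxHeartbeats 1000000


/-- The matrix `A` acting as a continuous linear map on `EuclideanSpace ℝ (Fin d)`;
its operator norm is the spectral norm of `A`. -/
noncomputable def matCLM {d : ℕ} (A : Matrix (Fin d) (Fin d) ℝ) :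
    EuclideanSpace ℝ (Fin d) →L[ℝ] EuclideanSpace ℝ (Fin d) :=
  Matrix.toEuclideanCLM (𝕜 := ℝ) A

lemma key_id_aux {R : Type*} [Ring R] [Algebra ℝ R] (B : R) (α : ℝ) (j : ℕ) :
    (1 - α • B) ^ (j + 1) - (1 - (((j : ℕ) + 1 : ℝ) * α) • B)
      = ((1 - α • B) ^ j - (1 - ((j : ℝ) * α) • B)) * (1 - α • B)
        + ((j : ℝ) * α ^ 2) • (B * B) := by
  rw [pow_succ]
  simp only [sub_mul, mul_sub, mul_one, one_mul, smul_mul_smul_comm]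
  module

lemma aux_pow_sub_lin {d : ℕ} (B : EuclideanSpace ℝ (Fin d) →L[ℝ] EuclideanSpace ℝ (Fin d))
    (α : ℝ) (hα : 0 ≤ α) (j : ℕ) :
    ‖(1 - α • B) ^ j - (1 - ((j : ℝ) * α) • B)‖ ≤
      (1 + α * ‖B‖) ^ j - 1 - (j : ℝ) * α * ‖B‖ := by
  induction j with
  | zero =>
    rw [show ((0 : ℕ) : ℝ) * α = 0 by simp, zero_smul ℝ B]
    simp
  | succ j ih =>
    have key : (1 - α • B) ^ (j + 1) - (1 - (((j : ℕ) + 1 : ℝ) * α) • B)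
        = ((1 - α • B) ^ j - (1 - ((j : ℝ) * α) • B)) * (1 - α • B)
          + ((j : ℝ) * α ^ 2) • (B * B) := key_id_aux B α j
    have hB : (0 : ℝ) ≤ ‖B‖ := norm_nonneg _
    have h1 : ‖(1 : EuclideanSpace ℝ (Fin d) →L[ℝ] EuclideanSpace ℝ (Fin d)) - α • B‖
        ≤ 1 + α * ‖B‖ := by
      refine (norm_sub_le _ _).trans ?_
      have : ‖(1 : EuclideanSpace ℝ (Fin d) →L[ℝ] EuclideanSpace ℝ (Fin d))‖ ≤ 1 :=
        ContinuousLinearMap.norm_id_le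
      have h2 : ‖α • B‖ ≤ α * ‖B‖ := by
        rw [norm_smul α B, Real.norm_of_nonneg hα]
      linarith
    have hE : ‖((1 - α • B) ^ j - (1 - ((j : ℝ) * α) • B)) * (1 - α • B)‖
        ≤ ((1 + α * ‖B‖) ^ j - 1 - (j : ℝ) * α * ‖B‖) * (1 + α * ‖B‖) := by
      refine (norm_mul_le _ _).trans ?_
      have hnn : (0 : ℝ) ≤ (1 + α * ‖B‖) ^ j - 1 - (j : ℝ) * α * ‖B‖ :=
        le_trans (norm_nonneg _) ih
      exact mul_le_mul ih h1 (norm_nonneg _) hnn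
    have hBB : ‖((j : ℝ) * α ^ 2) • (B * B)‖ ≤ (j : ℝ) * α ^ 2 * (‖B‖ * ‖B‖) := by
      rw [norm_smul ((j : ℝ) * α ^ 2) (B * B), Real.norm_of_nonneg (by positivity)]
      exact mul_le_mul_of_nonneg_left (norm_mul_le _ _) (by positivity)
    have := (key ▸ (norm_add_le _ _).trans (add_le_add hE hBB) :
      ‖(1 - α • B) ^ (j + 1) - (1 - (((j : ℕ) + 1 : ℝ) * α) • B)‖ ≤ _)
    push_cast at this ⊢
    calc ‖(1 - α • B) ^ (j + 1) - (1 - (((j : ℝ) + 1) * α) • B)‖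
        ≤ ((1 + α * ‖B‖) ^ j - 1 - (j : ℝ) * α * ‖B‖) * (1 + α * ‖B‖)
          + (j : ℝ) * α ^ 2 * (‖B‖ * ‖B‖) := this
      _ = (1 + α * ‖B‖) ^ (j + 1) - 1 - ((j : ℝ) + 1) * α * ‖B‖ := by ring

/-- First-order Taylor bound for matrix powers:
`‖(I - αA)^j - (I - jαA)‖ ≤ (1 + α‖A‖)^j - 1 - jα‖A‖` in the spectral norm. -/
theorem opNorm_pow_sub_linearization_le {d : ℕ} (A : Matrix (Fin d) (Fin d) ℝ)
    (α : ℝ) (hα : 0 ≤ α) (j : ℕ) :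
    ‖matCLM ((1 - α • A) ^ j - (1 - ((j : ℝ) * α) • A))‖ ≤
      (1 + α * ‖matCLM A‖) ^ j - 1 - (j : ℝ) * α * ‖matCLM A‖ := by
  have hmap : matCLM ((1 - α • A) ^ j - (1 - ((j : ℝ) * α) • A))
      = (1 - α • matCLM A) ^ j - (1 - ((j : ℝ) * α) • matCLM A) := by
    simp [matCLM, map_sub, map_pow, map_smul, map_one]
  rw [hmap]
  exact aux_pow_sub_lin (matCLM A) α hα j
end

section
/- Let A₁, …, A_n be real d×d matrices, let A = (1/n)Σ_{i=1}^n A_i, let α ∈ ℝ, b ∈ ℝ^d, and x₀ ∈ ℝ^d. Let (x_k) be the Richardson iteration for A with initial point x₀, and for each i let (x_{i,k}) be the Richardson iteration for A_i with the same initial point x_{i,0} = x₀. Then the first-order terms cancel exactly at the second iterate: (1/n)Σ_{i=1}^n x_{i,2} − x_2 = α² ((1/n)Σ_{i=1}^n A_i² − A²) x₀, and consequently ‖(1/n)Σ_{i=1}^n x_{i,2} − x_2‖ ≤ α² ‖(1/n)Σ_{i=1}^n A_i² − A²‖ · ‖x₀‖. -/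
/-- The Richardson iteration `x_k = (I - αA) x_{k-1} + α b` with initial point `x₀`. -/
noncomputable def richardson {d : ℕ} (A : Matrix (Fin d) (Fin d) ℝ) (α : ℝ)
    (b x₀ : EuclideanSpace ℝ (Fin d)) : ℕ → EuclideanSpace ℝ (Fin d)
  | 0 => x₀
  | k + 1 => matCLM (1 - α • A) (richardson A α b x₀ k) + α • b

lemma matCLM_mul {d : ℕ} (M N : Matrix (Fin d) (Fin d) ℝ) (x : EuclideanSpace ℝ (Fin d)) :
    matCLM (M * N) x = matCLM M (matCLM N x) := by
  simp [matCLM, map_mul]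

lemma matCLM_smul {d : ℕ} (c : ℝ) (M : Matrix (Fin d) (Fin d) ℝ) :
    matCLM (c • M) = c • matCLM M := by
  simp [matCLM]

lemma matCLM_sub_apply {d : ℕ} (M N : Matrix (Fin d) (Fin d) ℝ) (x : EuclideanSpace ℝ (Fin d)) :
    matCLM (M - N) x = matCLM M x - matCLM N x := by
  simp [matCLM, map_sub]

lemma matCLM_avg {d n : ℕ} (M : Fin n → Matrix (Fin d) (Fin d) ℝ) (c : ℝ)
    (x : EuclideanSpace ℝ (Fin d)) :
    c • (∑ i, matCLM (M i) x) = matCLM (c • ∑ i, M i) x := by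
  simp [matCLM, map_smul, map_sum, ContinuousLinearMap.sum_apply]

lemma rich2 {d : ℕ} (M : Matrix (Fin d) (Fin d) ℝ) (α : ℝ) (b x₀ : EuclideanSpace ℝ (Fin d)) :
    richardson M α b x₀ 2 =
      matCLM ((1 - α • M) ^ 2) x₀ + α • matCLM (1 - α • M) b + α • b := by
  simp [richardson, sq, matCLM_mul, map_add, map_smul]

/-- At the second iterate the first-order terms cancel exactly:
the deviation of the average local iterate from the centralized iterate equals
`α² ((1/n)∑ Aᵢ² − A²) x₀`, and hence is bounded in norm by
`α² ‖(1/n)∑ Aᵢ² − A²‖ ‖x₀‖`. -/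
theorem avg_richardson_sub_richardson_two {d n : ℕ} (hn : 0 < n)
    (Ai : Fin n → Matrix (Fin d) (Fin d) ℝ) (A : Matrix (Fin d) (Fin d) ℝ)
    (hA : A = (n : ℝ)⁻¹ • ∑ i, Ai i)
    (α : ℝ) (b x₀ : EuclideanSpace ℝ (Fin d)) :
    (n : ℝ)⁻¹ • (∑ i, richardson (Ai i) α b x₀ 2) - richardson A α b x₀ 2 =
      matCLM (α ^ 2 • ((n : ℝ)⁻¹ • (∑ i, (Ai i) ^ 2) - A ^ 2)) x₀ ∧
    ‖(n : ℝ)⁻¹ • (∑ i, richardson (Ai i) α b x₀ 2) - richardson A α b x₀ 2‖ ≤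
      α ^ 2 * ‖matCLM ((n : ℝ)⁻¹ • (∑ i, (Ai i) ^ 2) - A ^ 2)‖ * ‖x₀‖ := by
  have hn' : (n : ℝ) ≠ 0 := Nat.cast_ne_zero.mpr hn.ne'
  -- squared expansion
  have hsq : ∀ M : Matrix (Fin d) (Fin d) ℝ,
      (1 - α • M) ^ 2 = 1 - (2 * α) • M + (α ^ 2) • M ^ 2 := by
    intro M
    rw [sq, sub_mul, mul_sub, mul_sub, one_mul, mul_one, smul_mul_smul_comm, sq M]
    simp only [Matrix.one_mul, Matrix.mul_one, one_mul]
    module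
  -- averaging a constant
  have hconst : ∀ (G : Type) [inst : AddCommGroup G] [inst2 : Module ℝ G] (g : G),
      (n : ℝ)⁻¹ • (∑ _i : Fin n, g) = g := by
    intro G _ _ g
    rw [Finset.sum_const, Finset.card_univ, Fintype.card_fin,
      ← Nat.cast_smul_eq_nsmul ℝ, smul_smul, inv_mul_cancel₀ hn', one_smul]
  -- matrix identities
  have e1 : (n : ℝ)⁻¹ • ∑ i, (2 * α) • Ai i = (2 * α) • A := by
    rw [hA, ← Finset.smul_sum, smul_comm]
  have e2 : (n : ℝ)⁻¹ • ∑ i, (α ^ 2) • (Ai i) ^ 2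
      = (α ^ 2) • ((n : ℝ)⁻¹ • ∑ i, (Ai i) ^ 2) := by
    rw [← Finset.smul_sum, smul_comm]
  have key : (n : ℝ)⁻¹ • (∑ i, ((1 - α • Ai i) ^ 2)) - (1 - α • A) ^ 2 =
      α ^ 2 • ((n : ℝ)⁻¹ • (∑ i, (Ai i) ^ 2) - A ^ 2) := by
    calc (n : ℝ)⁻¹ • (∑ i, ((1 - α • Ai i) ^ 2)) - (1 - α • A) ^ 2
        = ((n : ℝ)⁻¹ • (∑ _i : Fin n, (1 : Matrix (Fin d) (Fin d) ℝ))
            - (n : ℝ)⁻¹ • ∑ i, (2 * α) • Ai i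
            + (n : ℝ)⁻¹ • ∑ i, (α ^ 2) • (Ai i) ^ 2)
          - (1 - (2 * α) • A + (α ^ 2) • A ^ 2) := by
          simp only [hsq, Finset.sum_add_distrib, Finset.sum_sub_distrib, smul_add, smul_sub]
      _ = α ^ 2 • ((n : ℝ)⁻¹ • (∑ i, (Ai i) ^ 2) - A ^ 2) := by
          rw [hconst, e1, e2]; module
  have keyb : (n : ℝ)⁻¹ • ∑ i, (1 - α • Ai i) = 1 - α • A := by
    rw [Finset.sum_sub_distrib, smul_sub, hconst, hA, ← Finset.smul_sum]
    module
  -- main identity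
  have main : (n : ℝ)⁻¹ • (∑ i, richardson (Ai i) α b x₀ 2) - richardson A α b x₀ 2 =
      matCLM (α ^ 2 • ((n : ℝ)⁻¹ • (∑ i, (Ai i) ^ 2) - A ^ 2)) x₀ := by
    calc (n : ℝ)⁻¹ • (∑ i, richardson (Ai i) α b x₀ 2) - richardson A α b x₀ 2
        = ((n : ℝ)⁻¹ • ∑ i, matCLM ((1 - α • Ai i) ^ 2) x₀
            - matCLM ((1 - α • A) ^ 2) x₀)
          + α • ((n : ℝ)⁻¹ • ∑ i, matCLM (1 - α • Ai i) b - matCLM (1 - α • A) b)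
          + ((n : ℝ)⁻¹ • (∑ _i : Fin n, α • b) - α • b) := by
          simp only [rich2, Finset.sum_add_distrib, smul_add, smul_sub]
          rw [show (∑ x : Fin n, α • (matCLM (1 - α • Ai x)) b)
              = α • ∑ x : Fin n, (matCLM (1 - α • Ai x)) b from (Finset.smul_sum).symm,
            smul_comm ((n : ℝ)⁻¹) α]
          abel
      _ = matCLM (α ^ 2 • ((n : ℝ)⁻¹ • (∑ i, (Ai i) ^ 2) - A ^ 2)) x₀ := by
          rw [matCLM_avg, matCLM_avg, keyb, hconst, ← matCLM_sub_apply, key]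
          simp
  refine ⟨main, ?_⟩
  rw [main, matCLM_smul]
  calc ‖(α ^ 2 • matCLM ((n : ℝ)⁻¹ • (∑ i, (Ai i) ^ 2) - A ^ 2)) x₀‖
      = α ^ 2 * ‖matCLM ((n : ℝ)⁻¹ • (∑ i, (Ai i) ^ 2) - A ^ 2) x₀‖ := by
        simp [norm_smul, abs_of_nonneg (sq_nonneg α)]
    _ ≤ α ^ 2 * (‖matCLM ((n : ℝ)⁻¹ • (∑ i, (Ai i) ^ 2) - A ^ 2)‖ * ‖x₀‖) := by
        exact mul_le_mul_of_nonneg_left (ContinuousLinearMap.le_opNorm _ _) (sq_nonneg α)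
    _ = α ^ 2 * ‖matCLM ((n : ℝ)⁻¹ • (∑ i, (Ai i) ^ 2) - A ^ 2)‖ * ‖x₀‖ := by ring
end

section
/- (Theorem 2: linear-convergence regime.) Let κ > 0, 0 < δκ < 1, γ ∈ [0, 1/2), t₀ ∈ ℕ, and let (e_t) be a sequence of nonnegative reals with e_0 > 0 satisfying, for all t > t₀, e_t ≤ 2tγ^{2^{t−t₀}}/(κ(1 − γ^{2^{t−t₀}})) + (δκ)^t e_0. Then for every t > t₀ such that e_0 ≥ 2tγ^{2^{t−t₀}}/(κ (δκ)^t (1 − γ^{2^{t−t₀}})), one has e_t ≤ 2(δκ)^t e_0. Moreover, for any ε > 0, if additionally t ≥ log(2e_0/ε)/log(1/(δκ)) then e_t ≤ ε. -/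
/-- Theorem 2 (linear-convergence regime): if the error sequence satisfies the
linear-quadratic recursion bound of Lemma 2 and the initial error dominates the
quadratic term, then the error decays linearly as `2(δκ)^t e₀`; moreover once
`t ≥ log(2e₀/ε)/log(1/(δκ))` the error is at most `ε`. -/
theorem done_theorem2_linear_regime (κ δ γ : ℝ) (t₀ : ℕ) (e : ℕ → ℝ)
    (hκ : 0 < κ) (hδκ0 : 0 < δ * κ) (hδκ1 : δ * κ < 1)
    (hγ0 : 0 ≤ γ) (hγ1 : γ < 1 / 2)
    (he : ∀ t, 0 ≤ e t) (he0 : 0 < e 0)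
    (hrec : ∀ t : ℕ, t₀ < t →
      e t ≤ 2 * (t : ℝ) * γ ^ (2 ^ (t - t₀)) / (κ * (1 - γ ^ (2 ^ (t - t₀)))) +
        (δ * κ) ^ t * e 0) :
    ∀ t : ℕ, t₀ < t →
      2 * (t : ℝ) * γ ^ (2 ^ (t - t₀)) /
          (κ * (δ * κ) ^ t * (1 - γ ^ (2 ^ (t - t₀)))) ≤ e 0 →
      e t ≤ 2 * (δ * κ) ^ t * e 0 ∧
      ∀ ε : ℝ, 0 < ε →
        Real.log (2 * e 0 / ε) / Real.log (1 / (δ * κ)) ≤ (t : ℝ) → e t ≤ ε := by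
  intro t ht hdom
  have hN : (2 : ℕ) ^ (t - t₀) ≠ 0 := (pow_pos (by norm_num) _).ne'
  have hg1 : γ ^ (2 ^ (t - t₀)) < 1 := pow_lt_one₀ hγ0 (by linarith) hN
  have hg0 : 0 ≤ γ ^ (2 ^ (t - t₀)) := pow_nonneg hγ0 _
  have hp : 0 < (δ * κ) ^ t := pow_pos hδκ0 t
  have key : 2 * (t : ℝ) * γ ^ (2 ^ (t - t₀)) / (κ * (1 - γ ^ (2 ^ (t - t₀)))) ≤
      (δ * κ) ^ t * e 0 := by
    rw [div_le_iff₀ (mul_pos (mul_pos hκ hp) (by linarith))] at hdom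
    rw [div_le_iff₀ (by nlinarith : (0:ℝ) < κ * (1 - γ ^ (2 ^ (t - t₀))))]
    nlinarith [hdom]
  have hmain : e t ≤ 2 * (δ * κ) ^ t * e 0 := by
    have := hrec t ht
    linarith
  refine ⟨hmain, ?_⟩
  intro ε hε hT
  have hlog : 0 < Real.log (1 / (δ * κ)) := by
    rw [one_div, Real.log_inv]
    linarith [Real.log_neg hδκ0 hδκ1]
  have h1 : Real.log (2 * e 0 / ε) ≤ (t : ℝ) * Real.log (1 / (δ * κ)) :=
    (div_le_iff₀ hlog).mp hT
  have h2 : 2 * e 0 / ε ≤ (1 / (δ * κ)) ^ t := by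
    have hx : (0:ℝ) < 2 * e 0 / ε := by positivity
    have hy : (0:ℝ) < (1 / (δ * κ)) ^ t := by positivity
    rw [← Real.log_le_log_iff hx hy, Real.log_pow]
    exact h1
  have h3 : 2 * e 0 ≤ ((δ * κ) ^ t)⁻¹ * ε := by
    rw [div_le_iff₀ hε, one_div, inv_pow] at h2
    linarith
  have h4 : 2 * (δ * κ) ^ t * e 0 ≤ ε := by
    have := mul_le_mul_of_nonneg_left h3 hp.le
    have hc : (δ * κ) ^ t * (((δ * κ) ^ t)⁻¹ * ε) = ε := by
      field_simp
    rw [hc] at this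
    nlinarith
  linarith
end
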